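/- arXiv:2208.08271 — 5 statements merged into one kernel-verified Lean document; each statement's English description precedes it below -/
import Mathlib

section
/- Any two trees that are both α-regular (every vertex has exactly α neighbors) for the same infinite cardinal α are isomorphic as graphs. -/
/-!
Root a tree at a vertex `r` and call the neighbours `w` of `v` with `d(r, w) = d(r, v) + 1` the
children of `v`. In a tree every neighbour of `v` but at most one (its parent) is a child, so if
all degrees equal an infinite cardinal `α`, every vertex has exactly `α` children. Choosing a
bijection from a fixed set of size `α` onto each set of children, reading a word letter by letter
from `r` is an isomorphism from the tree of finite words (each word adjacent to its one-letter
extensions) onto the given tree; hence any two such trees are isomorphic.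
-/

open Cardinal

universe u

theorem Cardinal.mk_eq_of_subset_of_subsingleton_diff {α : Type*} {s t : Set α} (hst : s ⊆ t)
    (hdiff : (t \ s).Subsingleton) (ht : ℵ₀ ≤ #t) : #s = #t := by
  have hle : #t ≤ #s + 1 := by
    rw [← mk_sdiff_add_mk hst, add_comm]
    gcongr
    exact mk_le_one_iff_set_subsingleton.mpr hdiff
  have hs : ℵ₀ ≤ #s := by
    by_contra! hs
    exact (ht.trans hle).not_gt (add_lt_aleph0 hs one_lt_aleph0)
  exact (mk_le_mk_of_subset hst).antisymm (add_one_eq hs ▸ hle)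

namespace SimpleGraph

variable {V : Type*} {G : SimpleGraph V}

/-- `a :: l` is a child of `l`: words grow at their head. -/
def wordTree (X : Type*) : SimpleGraph (List X) where
  Adj l m := (∃ a, m = a :: l) ∨ (∃ a, l = a :: m)
  symm := ⟨fun _ _ => Or.symm⟩
  loopless := ⟨fun l h => by
    rcases h with ⟨a, h⟩ | ⟨a, h⟩ <;> simpa using congrArg List.length h⟩

def children (G : SimpleGraph V) (r v : V) : Set V :=
  {w | G.Adj v w ∧ G.dist r w = G.dist r v + 1}

lemma IsTree.eq_of_adj_of_dist_add_one_eq (hT : G.IsTree) (r : V) {v u₁ u₂ : V}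
    (h₁ : G.Adj u₁ v) (h₂ : G.Adj u₂ v) (hd₁ : G.dist r u₁ + 1 = G.dist r v)
    (hd₂ : G.dist r u₂ + 1 = G.dist r v) : u₁ = u₂ := by
  obtain ⟨p₁, -, hp₁⟩ := hT.connected.exists_path_of_dist r u₁
  obtain ⟨p₂, -, hp₂⟩ := hT.connected.exists_path_of_dist r u₂
  have hpath : ∀ {u} (p : G.Walk r u) (h : G.Adj u v), p.length = G.dist r u →
      G.dist r u + 1 = G.dist r v → (p.concat h).IsPath := fun p h hp hd =>
    (p.concat h).isPath_of_length_eq_dist (by rw [Walk.length_concat, hp, hd])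
  have := (hT.isAcyclic.subsingleton_path r v).elim
    ⟨_, hpath p₁ h₁ hp₁ hd₁⟩ ⟨_, hpath p₂ h₂ hp₂ hd₂⟩
  exact (Walk.concat_inj (Subtype.mk.inj this)).1

lemma IsTree.subsingleton_neighborSet_diff_children (hT : G.IsTree) (r v : V) :
    (G.neighborSet v \ G.children r v).Subsingleton := by
  have parent {w} (hw : w ∈ G.neighborSet v \ G.children r v) : G.dist r w + 1 = G.dist r v :=
    ((hT.dist_eq_dist_add_one_of_adj r hw.1).resolve_right fun h => hw.2 ⟨hw.1, h⟩).symm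
  exact fun w₁ hw₁ w₂ hw₂ =>
    hT.eq_of_adj_of_dist_add_one_eq r hw₁.1.symm hw₂.1.symm (parent hw₁) (parent hw₂)

lemma Connected.exists_mem_children_of_dist_eq_add_one (hc : G.Connected) {r v : V} {n : ℕ}
    (hv : G.dist r v = n + 1) : ∃ w, G.dist r w = n ∧ v ∈ G.children r w := by
  obtain ⟨p, -, hp⟩ := hc.exists_path_of_dist r v
  have hnil : ¬p.Nil := by rw [← Walk.length_eq_zero_iff]; omega
  have hadj := p.adj_penultimate hnil
  have hle : G.dist r p.penultimate ≤ n := by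
    have := G.dist_le p.dropLast
    rw [Walk.length_dropLast] at this
    omega
  have := hadj.diff_dist_adj (u := r)
  exact ⟨p.penultimate, by omega, hadj, by omega⟩

section descend

variable {X : Type*} {r : V} (e : ∀ v, X ≃ G.children r v)

def descend (l : List X) : V :=
  l.foldr (fun a v => e v a) r

lemma descend_cons_mem_children (a : X) (l : List X) :
    descend e (a :: l) ∈ G.children r (descend e l) :=
  (e _ a).2

lemma dist_descend (l : List X) : G.dist r (descend e l) = l.length := by
  induction l with
  | nil => exact dist_self
  | cons a l ih => rw [(descend_cons_mem_children e a l).2, ih, List.length_cons]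

lemma descend_injective (hT : G.IsTree) : Function.Injective (descend e) := by
  intro l m hlm
  have hlen : l.length = m.length := by rw [← dist_descend e, hlm, dist_descend]
  induction l generalizing m with
  | nil => exact (List.length_eq_zero_iff.mp hlen.symm).symm
  | cons a l ih =>
    obtain ⟨b, m, rfl⟩ := List.exists_cons_of_length_eq_add_one hlen.symm
    have ha := descend_cons_mem_children e a l
    have hb := descend_cons_mem_children e b m
    rw [hlm] at ha
    have hlm' : descend e l = descend e m :=
      hT.eq_of_adj_of_dist_add_one_eq r ha.1 hb.1 ha.2.symm hb.2.symm
    obtain rfl := ih hlm' (Nat.succ_injective hlen)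
    rw [(e _).injective (Subtype.ext hlm)]

lemma descend_surjective (hc : G.Connected) : Function.Surjective (descend e) := by
  suffices ∀ n v, G.dist r v = n → ∃ l, descend e l = v from fun v => this _ v rfl
  intro n
  induction n with
  | zero => exact fun v hv => ⟨[], hc.dist_eq_zero_iff.mp hv⟩
  | succ n ih =>
    intro v hv
    obtain ⟨w, hw, hvw⟩ := hc.exists_mem_children_of_dist_eq_add_one hv
    obtain ⟨l, rfl⟩ := ih w hw
    obtain ⟨a, ha⟩ := (e _).surjective ⟨v, hvw⟩
    exact ⟨a :: l, congrArg Subtype.val ha⟩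

lemma adj_descend_iff (hT : G.IsTree) {l m : List X} :
    G.Adj (descend e l) (descend e m) ↔ (wordTree X).Adj l m := by
  have child_of_adj {l m} (hadj : G.Adj (descend e l) (descend e m))
      (hd : G.dist r (descend e m) = G.dist r (descend e l) + 1) : ∃ a, m = a :: l := by
    obtain ⟨a, ha⟩ := (e _).surjective ⟨_, hadj, hd⟩
    exact ⟨a, descend_injective e hT (congrArg Subtype.val ha).symm⟩
  constructor
  · intro hadj
    rcases hT.dist_eq_dist_add_one_of_adj r hadj with hd | hd
    · exact .inr (child_of_adj hadj.symm hd)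
    · exact .inl (child_of_adj hadj hd)
  · rintro (⟨a, rfl⟩ | ⟨a, rfl⟩)
    · exact (descend_cons_mem_children e a l).1
    · exact (descend_cons_mem_children e a m).1.symm

end descend

theorem IsTree.nonempty_wordTree_iso (hT : G.IsTree) (r : V) {X : Type*}
    (hX : ∀ v, Nonempty (X ≃ G.children r v)) : Nonempty (wordTree X ≃g G) :=
  let e v := (hX v).some
  ⟨⟨.ofBijective _ ⟨descend_injective e hT, descend_surjective e hT.connected⟩,
    adj_descend_iff e hT⟩⟩

theorem IsTree.mk_children_eq (hT : G.IsTree) (r : V) {α : Cardinal} (hα : ℵ₀ ≤ α)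
    (hreg : ∀ v, #(G.neighborSet v) = α) (v : V) : #(G.children r v) = α :=
  hreg v ▸ mk_eq_of_subset_of_subsingleton_diff (fun _ hw => hw.1)
    (hT.subsingleton_neighborSet_diff_children r v) (hreg v ▸ hα)

theorem IsTree.nonempty_wordTree_iso_of_regular {V : Type u} {G : SimpleGraph V}
    (hT : G.IsTree) {α : Cardinal.{u}} (hα : ℵ₀ ≤ α) (hreg : ∀ v, #(G.neighborSet v) = α) :
    Nonempty (wordTree α.out ≃g G) :=
  hT.nonempty_wordTree_iso hT.connected.nonempty.some fun v => by
    rw [← Cardinal.eq, mk_out, hT.mk_children_eq _ hα hreg]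

end SimpleGraph

/-- Any two α-regular trees, for the same infinite cardinal α, are isomorphic. -/
theorem stmt_0 {V W : Type u} (α : Cardinal.{u}) (hα : ℵ₀ ≤ α)
    (T₁ : SimpleGraph V) (T₂ : SimpleGraph W)
    (hT₁c : T₁.Connected) (hT₁a : T₁.IsAcyclic)
    (hT₂c : T₂.Connected) (hT₂a : T₂.IsAcyclic)
    (hreg₁ : ∀ v : V, #(T₁.neighborSet v) = α)
    (hreg₂ : ∀ w : W, #(T₂.neighborSet w) = α) :
    Nonempty (T₁ ≃g T₂) := by
  obtain ⟨e₁⟩ := SimpleGraph.IsTree.nonempty_wordTree_iso_of_regular ⟨hT₁c, hT₁a⟩ hα hreg₁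
  obtain ⟨e₂⟩ := SimpleGraph.IsTree.nonempty_wordTree_iso_of_regular ⟨hT₂c, hT₂a⟩ hα hreg₂
  exact ⟨e₁.symm.trans e₂⟩
end

section
/- Let α be an infinite cardinal, let T be an α-regular tree, and let (A_j)_{j∈J} be a family of trees each of order α, with |J| = α. Then the disjoint union ⋃_{j∈J} A_j is isomorphic to a spanning forest of T. -/
open Cardinal

universe u

/-- The disjoint union of a family of graphs, as a graph on the sigma type. -/
def sigmaGraph {ι : Type u} {W : ι → Type u} (A : ∀ i, SimpleGraph (W i)) :
    SimpleGraph (Σ i, W i) where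
  Adj x y := ∃ (i : ι) (a b : W i), (A i).Adj a b ∧ x = ⟨i, a⟩ ∧ y = ⟨i, b⟩
  symm := by
    constructor
    rintro x y ⟨i, a, b, h, rfl, rfl⟩
    exact ⟨i, b, a, h.symm, rfl, rfl⟩
  loopless := by
    constructor
    rintro x ⟨i, a, b, h, rfl, he⟩
    rw [Sigma.mk.inj_iff] at he
    obtain ⟨-, he⟩ := he
    exact (A i).loopless.irrefl a (heq_iff_eq.mp he ▸ h)

/-!
Enumerate each tree `A_j` along the initial well-order of type `α` so that every vertex other
than the first is adjacent to an earlier one (greedily, always taking the least admissible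
vertex); acyclicity makes that earlier neighbour unique, its parent. Order all pairs `(j, x)`
by `max` first, as in the proof of `κ * κ = κ`, so that every initial segment has fewer than
`α` elements, and embed greedily along this order: a vertex with a parent goes to an unused
`T`-neighbour of the image of its parent, which exists because `T` is `α`-regular. Roots go to
prescribed vertices of `T` whenever these are still free; since there are `α` roots, every
vertex of `T` is eventually used, so the map is a bijection sending edges to edges.
-/

open Set Function
open scoped Ordinal

theorem WellFounded.exists_fun_of_forall_exists {ι β : Type*} {r : ι → ι → Prop}
    (hr : WellFounded r) (P : ∀ p, (∀ q, r q p → β) → β → Prop) (h : ∀ p g, ∃ b, P p g b) :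
    ∃ f : ι → β, ∀ p, P p (fun q _ => f q) (f p) := by
  choose c hc using h
  exact ⟨hr.fix c, fun p => by rw [hr.fix_eq]; exact hc p _⟩

theorem injective_of_forall_notMem_image {ι β : Type*} (r : ι → ι → Prop) [Std.Trichotomous r]
    {f : ι → β} (h : ∀ p, f p ∉ f '' {q | r q p}) : Injective f := by
  intro p q hpq
  rcases trichotomous_of r p q with hr | rfl | hr
  · exact absurd ⟨p, hr, hpq⟩ (h q)
  · rfl
  · exact absurd ⟨q, hr, hpq.symm⟩ (h p)

namespace SimpleGraph

variable {V : Type u} {G : SimpleGraph V}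

theorem Preconnected.exists_adj_of_nonempty_of_compl_nonempty (hG : G.Preconnected) {S : Set V}
    (hS : S.Nonempty) (hS' : Sᶜ.Nonempty) : ∃ a ∈ S, ∃ b ∉ S, G.Adj a b := by
  obtain ⟨a, ha⟩ := hS
  obtain ⟨b, hb⟩ := hS'
  obtain ⟨d, -, hd, hd'⟩ := (hG a b).some.exists_boundary_dart S ha hb
  exact ⟨d.fst, hd, d.snd, hd', d.adj⟩

theorem Preconnected.mk_le_mk_list {ι : Type u} (hG : G.Preconnected) (nb : V → ι → V)
    (hnb : ∀ v w, G.Adj v w → ∃ i, nb v i = w) : #V ≤ #(List ι) := by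
  rcases isEmpty_or_nonempty V with hV | ⟨⟨v₀⟩⟩
  · simp
  refine mk_le_of_surjective (f := fun l => l.foldl nb v₀) fun w => ?_
  obtain ⟨p⟩ := hG v₀ w
  induction p with
  | nil => exact ⟨[], rfl⟩
  | cons h _ ih =>
    obtain ⟨i, rfl⟩ := hnb _ _ h
    obtain ⟨l, hl⟩ := ih
    exact ⟨i :: l, hl⟩

theorem Connected.mk_eq_of_forall_mk_neighborSet_eq (hG : G.Connected) {κ : Cardinal.{u}}
    (hκ : ℵ₀ ≤ κ) (h : ∀ v, #(G.neighborSet v) = κ) : #V = κ := by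
  obtain ⟨v₀⟩ := hG.nonempty
  have e (v : V) : G.neighborSet v₀ ≃ G.neighborSet v :=
    Classical.choice (Cardinal.eq.1 ((h v₀).trans (h v).symm))
  refine le_antisymm ?_ ((h v₀).symm.trans_le (mk_set_le _))
  calc #V ≤ #(List (G.neighborSet v₀)) :=
        hG.preconnected.mk_le_mk_list (fun v i => e v i) fun v w hvw =>
          ⟨(e v).symm ⟨w, hvw⟩, by simp⟩
    _ ≤ κ := (mk_list_le_max _).trans (by rw [h, max_eq_right hκ])

def attachable (G : SimpleGraph V) (S : Set V) : Set V :=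
  {w | w ∉ S ∧ (S.Nonempty → ∃ s ∈ S, G.Adj s w)}

theorem Preconnected.attachable_nonempty (hG : G.Preconnected) {S : Set V} (hS : #S < #V) :
    (G.attachable S).Nonempty := by
  obtain ⟨w, hw⟩ : Sᶜ.Nonempty := by
    rw [nonempty_compl]
    rintro rfl
    exact hS.ne mk_univ
  by_cases hne : S.Nonempty
  · obtain ⟨a, ha, b, hb, hab⟩ := hG.exists_adj_of_nonempty_of_compl_nonempty hne ⟨w, hw⟩
    exact ⟨b, hb, fun _ => ⟨a, ha, hab⟩⟩
  · exact ⟨w, hw, fun h => absurd h hne⟩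

section Enumeration

variable {ι : Type u} [LinearOrder ι] [WellFoundedLT ι]

theorem Preconnected.exists_equiv_forall_exists_lt_adj (hG : G.Preconnected)
    (hι : (#ι).ord = typeLT ι) (hinf : ℵ₀ ≤ #ι) (hV : #V = #ι) :
    ∃ e : ι ≃ V, ∀ x, ¬IsMin x → ∃ y < x, G.Adj (e y) (e x) := by
  have : Infinite ι := infinite_iff.2 hinf
  obtain ⟨e₀⟩ := Cardinal.eq.1 hV
  obtain ⟨f, hf⟩ := wellFounded_lt.exists_fun_of_forall_exists
    (fun (x : ι) (g : ∀ y, y < x → V) =>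
      MinimalFor (· ∈ G.attachable (range fun y : Iio x => g y y.2)) e₀) fun x g =>
    exists_minimalFor_of_wellFoundedLT _ e₀
      (hG.attachable_nonempty (mk_range_le.trans_lt ((mk_Iio_lt x hι).trans_eq hV.symm)))
  simp only [← image_eq_range] at hf
  have hinj : Injective f := injective_of_forall_notMem_image (· < ·) fun x => (hf x).1.1
  -- A vertex adjacent to `f t` but never chosen stays attachable after `t`, so its index
  -- would bound the indices of the `#ι` vertices chosen after `t`.
  have hclosed (t : ι) (w : V) (hadj : G.Adj (f t) w) : w ∈ range f := by
    by_contra hw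
    have hle : MapsTo (e₀ ∘ f) (Ioi t) (Iic (e₀ w)) := fun x hx =>
      (le_total _ _).elim id <| (hf x).2 ⟨fun ⟨y, _, hy⟩ => hw ⟨y, hy⟩,
        fun _ => ⟨f t, ⟨t, hx, rfl⟩, hadj⟩⟩
    have := mk_le_mk_of_subset hle.image_subset
    rw [mk_image_eq_of_injOn _ _ (e₀.injective.comp hinj).injOn, ← compl_Iic,
      mk_compl_of_infinite _ (mk_Iic_lt t hι hinf)] at this
    exact (mk_Iic_lt _ hι hinf).not_ge this
  have hsurj : Surjective f := by
    intro w
    by_contra hw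
    obtain ⟨a, ⟨t, rfl⟩, b, hb, hab⟩ :=
      hG.exists_adj_of_nonempty_of_compl_nonempty (range_nonempty f) ⟨w, hw⟩
    exact hb (hclosed t b hab)
  refine ⟨.ofBijective f ⟨hinj, hsurj⟩, fun x hx => ?_⟩
  obtain ⟨_, ⟨y, hy, rfl⟩, hadj⟩ := (hf x).1.2 (Nonempty.image f (not_isMin_iff.1 hx))
  exact ⟨y, hy, hadj⟩

variable {e : ι ≃ V}

theorem exists_isMin_walk_of_forall_exists_lt_adj
    (he : ∀ x, ¬IsMin x → ∃ y < x, G.Adj (e y) (e x)) (x : ι) :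
    ∃ m, IsMin m ∧ ∃ p : G.Walk (e m) (e x), ∀ u ∈ p.support, e.symm u ≤ x := by
  induction x using WellFoundedLT.induction with
  | ind x ih =>
    by_cases hx : IsMin x
    · exact ⟨x, hx, .nil, by simp⟩
    obtain ⟨y, hyx, hadj⟩ := he x hx
    obtain ⟨m, hm, p, hp⟩ := ih y hyx
    refine ⟨m, hm, p.concat hadj, fun u hu => ?_⟩
    rw [Walk.support_concat, List.mem_append, List.mem_singleton] at hu
    rcases hu with hu | rfl
    · exact (hp u hu).trans hyx.le
    · simp

/-- Two earlier neighbours of `x` are joined through the first vertex by a path avoiding `x`,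
which closes a cycle with the two edges at `x`. -/
theorem IsAcyclic.eq_of_lt_of_adj (hG : G.IsAcyclic)
    (he : ∀ x, ¬IsMin x → ∃ y < x, G.Adj (e y) (e x)) {x y₁ y₂ : ι} (h₁ : y₁ < x) (h₂ : y₂ < x)
    (a₁ : G.Adj (e y₁) (e x)) (a₂ : G.Adj (e y₂) (e x)) : y₁ = y₂ := by
  classical
  by_contra hne
  obtain ⟨m, hm, p₁, hp₁⟩ := exists_isMin_walk_of_forall_exists_lt_adj he y₁
  obtain ⟨m', hm', p₂, hp₂⟩ := exists_isMin_walk_of_forall_exists_lt_adj he y₂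
  obtain rfl : m = m' := (le_total m m').elim hm'.eq_of_le fun h => (hm.eq_of_le h).symm
  let q := (p₁.reverse.append p₂).bypass
  have hx : e x ∉ q.support := fun hmem => by
    have := Walk.support_bypass_subset_support _ hmem
    rw [Walk.mem_support_append_iff, Walk.support_reverse, List.mem_reverse] at this
    rcases this with h | h
    · exact h₁.not_ge (by simpa using hp₁ _ h)
    · exact h₂.not_ge (by simpa using hp₂ _ h)
  refine hx (hG.mem_support_of_ne_mem_support_of_adj_of_isPath (Walk.bypass_isPath _)
    (Path.singleton a₁).2 a₂ ?_)
  simp [Path.singleton, Ne.symm hne, h₂.ne]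

theorem IsAcyclic.exists_equiv_parent (hG : G.IsAcyclic) (hconn : G.Preconnected)
    (hι : (#ι).ord = typeLT ι) (hinf : ℵ₀ ≤ #ι) (hV : #V = #ι) :
    ∃ (e : ι ≃ V) (par : ι → ι), (∀ x, ¬IsMin x → par x < x) ∧
      ∀ x y, x < y → G.Adj (e x) (e y) → x = par y := by
  classical
  obtain ⟨e, he⟩ := hconn.exists_equiv_forall_exists_lt_adj hι hinf hV
  refine ⟨e, fun y => if h : IsMin y then y else (he y h).choose, fun y hy => ?_,
    fun x y hxy hadj => ?_⟩
  · simp only [dif_neg hy]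
    exact (he y hy).choose_spec.1
  · have hy : ¬IsMin y := not_isMin_of_lt hxy
    simp only [dif_neg hy]
    exact hG.eq_of_lt_of_adj he hxy (he y hy).choose_spec.1 hadj (he y hy).choose_spec.2

end Enumeration

end SimpleGraph

namespace Prod

variable {ι : Type u} [LinearOrder ι]

/-- The well-order on `ι × ι` from the proof of `Cardinal.mul_eq_self`. -/
def maxLex (p : ι × ι) : ι ×ₗ (ι ×ₗ ι) := toLex (max p.1 p.2, toLex p)

theorem maxLex_injective : Injective (maxLex (ι := ι)) := fun _ _ => congrArg Prod.snd

theorem maxLex_lt_maxLex_of_snd_lt {a x y : ι} (h : x < y) : maxLex (a, x) < maxLex (a, y) := by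
  simp only [maxLex, Prod.Lex.toLex_lt_toLex']
  exact ⟨max_le_max le_rfl h.le, fun _ => ⟨le_rfl, fun _ => h⟩⟩

theorem mk_setOf_maxLex_lt [WellFoundedLT ι] (hι : (#ι).ord = typeLT ι) (hinf : ℵ₀ ≤ #ι)
    (p : ι × ι) : #{q | maxLex q < maxLex p} < #ι := by
  have hsub : {q | maxLex q < maxLex p} ⊆ Iic (max p.1 p.2) ×ˢ Iic (max p.1 p.2) :=
    fun q hq => max_le_iff.1 (Prod.Lex.toLex_lt_toLex'.1 hq).1
  refine (mk_le_mk_of_subset hsub).trans_lt ?_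
  rw [mk_setProd]
  exact mul_lt_of_lt hinf (mk_Iic_lt _ hι hinf) (mk_Iic_lt _ hι hinf)

end Prod

namespace SimpleGraph

variable {V : Type u} (T : SimpleGraph V)

theorem exists_bijective_forall_adj_parent {ι : Type u} (r : ι → ι → Prop) [IsWellOrder ι r]
    (par : ι → ι) (R : Set ι) (hpar : ∀ p ∉ R, r (par p) p) (hsmall : ∀ p, #{q | r q p} < #V)
    (hdeg : ∀ v, #V ≤ #(T.neighborSet v)) (hR : #V ≤ #R) :
    ∃ f : ι → V, Bijective f ∧ ∀ p ∉ R, T.Adj (f (par p)) (f p) := by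
  -- The root `ρ v` is sent to `v` unless `v` is already used; this makes `f` surjective.
  obtain ⟨ρ⟩ := (Cardinal.le_def V R).1 hR
  obtain ⟨f, hf⟩ := IsWellFounded.wf.exists_fun_of_forall_exists (r := r)
    (fun p g v => v ∉ range (fun q : {q | r q p} => g q q.2) ∧
      (∀ hp : p ∉ R, T.Adj (g (par p) (hpar p hp)) v) ∧
      ∀ w, (ρ w : ι) = p → w ∉ range (fun q : {q | r q p} => g q q.2) → v = w) fun p g => by
    set S := range fun q : {q | r q p} => g q q.2
    have hS : #S < #V := mk_range_le.trans_lt (hsmall p)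
    by_cases hp : p ∈ R
    · by_cases hρ : ∃ w, (ρ w : ι) = p ∧ w ∉ S
      · obtain ⟨w, hw, hwS⟩ := hρ
        exact ⟨w, hwS, fun h => absurd hp h,
          fun w' hw' _ => ρ.injective (Subtype.ext (hw.trans hw'.symm))⟩
      · obtain ⟨v, hv⟩ : Sᶜ.Nonempty := nonempty_compl.2 fun h => hS.ne (by rw [h, mk_univ])
        exact ⟨v, hv, fun h => absurd hp h, fun w hw hwS => absurd ⟨w, hw, hwS⟩ hρ⟩
    · obtain ⟨v, hv, hvS⟩ : (T.neighborSet (g (par p) (hpar p hp)) \ S).Nonempty := by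
        rw [sdiff_nonempty]
        exact fun h => (hS.trans_le (hdeg _)).not_ge (mk_le_mk_of_subset h)
      exact ⟨v, hvS, fun _ => hv, fun w hw => absurd (hw ▸ (ρ w).2) hp⟩
  simp only [← image_eq_range] at hf
  refine ⟨f, ⟨injective_of_forall_notMem_image r fun p => (hf p).1, fun v => ?_⟩,
    fun p hp => (hf p).2.1 hp⟩
  by_cases hv : v ∈ f '' {q | r q (ρ v)}
  · obtain ⟨q, -, hq⟩ := hv
    exact ⟨q, hq⟩
  · exact ⟨ρ v, (hf (ρ v)).2.2 v rfl hv⟩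

theorem exists_bijective_prod_forall_adj_parent {J K : Type u} [LinearOrder K] [WellFoundedLT K]
    (hK : (#K).ord = typeLT K) (hKinf : ℵ₀ ≤ #K) (hJ : #J = #K) (hV : #V = #K)
    (hdeg : ∀ v, #K ≤ #(T.neighborSet v)) (par : J → K → K)
    (hpar : ∀ j x, ¬IsMin x → par j x < x) :
    ∃ f : J × K → V, Bijective f ∧ ∀ j x, ¬IsMin x → T.Adj (f (j, par j x)) (f (j, x)) := by
  obtain ⟨eJ⟩ := Cardinal.eq.1 hJ
  let φ : J × K ↪ K ×ₗ (K ×ₗ K) :=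
    (eJ.toEmbedding.prodMap (.refl K)).trans ⟨Prod.maxLex, Prod.maxLex_injective⟩
  have : IsWellOrder (J × K) (φ ⁻¹'o (· < ·)) := (RelEmbedding.preimage φ _).isWellOrder
  have hsmall (p : J × K) : #{q | φ q < φ p} < #V :=
    ((mk_preimage_of_injective (Prod.map eJ id) {q | Prod.maxLex q < Prod.maxLex (eJ p.1, p.2)}
      (eJ.injective.prodMap injective_id)).trans_lt
        (Prod.mk_setOf_maxLex_lt hK hKinf _)).trans_eq hV.symm
  obtain ⟨k⟩ : Nonempty K := (infinite_iff.2 hKinf).nonempty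
  obtain ⟨m, hm⟩ := exists_minimal_of_wellFoundedLT (fun _ : K => True) ⟨k, trivial⟩
  let R : Set (J × K) := {p | IsMin p.2}
  have hR : #V ≤ #R := hV ▸ hJ ▸ mk_le_of_injective
    (f := fun j : J => (⟨(j, m), minimal_true.1 hm⟩ : R)) fun _ _ h => congrArg (·.1.1) h
  obtain ⟨f, hf, hfadj⟩ := T.exists_bijective_forall_adj_parent (φ ⁻¹'o (· < ·))
    (fun p => (p.1, par p.1 p.2)) R (fun p hp => Prod.maxLex_lt_maxLex_of_snd_lt (hpar p.1 p.2 hp))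
    hsmall (fun v => hV.trans_le (hdeg v)) hR
  exact ⟨f, hf, fun j x hx => hfadj (j, x) hx⟩

theorem exists_le_isAcyclic_iso_of_forall_adj {U : Type*} {G : SimpleGraph U}
    (hT : T.IsAcyclic) (Φ : U ≃ V) (hΦ : ∀ u w, G.Adj u w → T.Adj (Φ u) (Φ w)) :
    ∃ F : SimpleGraph V, F ≤ T ∧ F.IsAcyclic ∧ Nonempty (G ≃g F) :=
  have hle : G.map Φ ≤ T := (map_le_iff_le_comap Φ.toEmbedding G T).2 hΦ
  ⟨G.map Φ, hle, hT.anti hle, ⟨Iso.map Φ G⟩⟩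

theorem exists_equiv_sigmaGraph_forall_adj {J : Type u} {W : J → Type u} {α : Cardinal.{u}}
    (hα : ℵ₀ ≤ α) (hV : #V = α) (hdeg : ∀ v, α ≤ #(T.neighborSet v))
    {A : ∀ j, SimpleGraph (W j)} (hAc : ∀ j, (A j).Connected) (hAa : ∀ j, (A j).IsAcyclic)
    (horder : ∀ j, #(W j) = α) (hJ : #J = α) :
    ∃ Φ : (Σ j, W j) ≃ V, ∀ u w, (sigmaGraph A).Adj u w → T.Adj (Φ u) (Φ w) := by
  let K := α.ord.ToType
  have hKα : #K = α := mk_ord_toType α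
  have hK : (#K).ord = typeLT K := by rw [hKα, Ordinal.type_toType]
  have hKinf : ℵ₀ ≤ #K := hKα ▸ hα
  choose e par hpar hparent using fun j =>
    (hAa j).exists_equiv_parent (hAc j).preconnected hK hKinf ((horder j).trans hKα.symm)
  obtain ⟨f, hf, hfadj⟩ := T.exists_bijective_prod_forall_adj_parent hK hKinf (hJ.trans hKα.symm)
    (hV.trans hKα.symm) (fun v => hKα.trans_le (hdeg v)) par hpar
  have key (j : J) (x y : K) (hxy : x < y) (hadj : (A j).Adj (e j x) (e j y)) :
      T.Adj (f (j, x)) (f (j, y)) :=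
    hparent j x y hxy hadj ▸ hfadj j y (not_isMin_of_lt hxy)
  refine ⟨(Equiv.sigmaCongrRight fun j => (e j).symm).trans
    ((Equiv.sigmaEquivProd J K).trans (.ofBijective f hf)), ?_⟩
  rintro _ _ ⟨j, a, b, hab, rfl, rfl⟩
  obtain ⟨x, rfl⟩ := (e j).surjective a
  obtain ⟨y, rfl⟩ := (e j).surjective b
  simp only [Equiv.trans_apply, Equiv.sigmaCongrRight_apply, Equiv.symm_apply_apply,
    Equiv.sigmaEquivProd_apply, Equiv.ofBijective_apply]
  rcases lt_or_gt_of_ne (fun h : x = y => hab.ne (h ▸ rfl)) with hxy | hxy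
  · exact key j x y hxy hab
  · exact (key j y x hxy hab.symm).symm

end SimpleGraph

/-- If `T` is an α-regular tree (α infinite) and `(A_j)_{j ∈ J}` is a family of trees each
of order α with `|J| = α`, then the disjoint union `⋃_j A_j` is isomorphic to a spanning
forest of `T`. -/
theorem stmt_3 {V : Type u} {J : Type u} {W : J → Type u} (α : Cardinal.{u}) (hα : ℵ₀ ≤ α)
    (T : SimpleGraph V) (hTc : T.Connected) (hTa : T.IsAcyclic)
    (hreg : ∀ v : V, #(T.neighborSet v) = α)
    (A : ∀ j, SimpleGraph (W j))
    (hAc : ∀ j, (A j).Connected) (hAa : ∀ j, (A j).IsAcyclic)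
    (horder : ∀ j, #(W j) = α) (hJ : #J = α) :
    ∃ F : SimpleGraph V, F ≤ T ∧ F.IsAcyclic ∧ Nonempty (sigmaGraph A ≃g F) := by
  have hV : #V = α := hTc.mk_eq_of_forall_mk_neighborSet_eq hα hreg
  obtain ⟨Φ, hΦ⟩ :=
    T.exists_equiv_sigmaGraph_forall_adj hα hV (fun v => (hreg v).ge) hAc hAa horder hJ
  exact T.exists_le_isAcyclic_iso_of_forall_adj hTa Φ hΦ
end

section
/- For every infinite cardinal α, every α-regular tree has an asymmetric spanning forest with no isolated vertices. -/
open Cardinal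

universe u

/-!
Root the tree; then every vertex has `α` children. Label the vertices by ordinals below `α⁺`:
give a set of roots pairwise distinct limit labels and, below a vertex of label `β`, keep one
child of each label `i < β` as a forest child, every other child becoming a new root. An
automorphism of this spanning forest preserves the label of every vertex at which it respects
the parent (induction on the label). It cannot move a root to a non-root, because root labels are
limits; so it fixes the roots, whose labels are distinct, and then every vertex by induction on
the height.
-/
universe w

open Function Order Set
open scoped Ordinal

namespace SimpleGraph

variable {V : Type u}

theorem mk_setOf_walk_length_le {G : SimpleGraph V} {κ : Cardinal.{u}} (hκ : ℵ₀ ≤ κ)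
    (hdeg : ∀ v, #(G.neighborSet v) ≤ κ) (r : V) (n : ℕ) :
    #{v | ∃ p : G.Walk v r, p.length = n} ≤ κ := by
  induction n with
  | zero =>
    have : {v | ∃ p : G.Walk v r, p.length = 0} ⊆ {r} :=
      fun v ⟨p, hp⟩ => Walk.eq_of_length_eq_zero hp
    exact (mk_le_mk_of_subset this).trans (by simpa using one_le_aleph0.trans hκ)
  | succ n ih =>
    have hsub : {v | ∃ p : G.Walk v r, p.length = n + 1} ⊆
        ⋃ w ∈ {v | ∃ p : G.Walk v r, p.length = n}, G.neighborSet w := by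
      rintro v ⟨p, hp⟩
      cases p with
      | nil => simp at hp
      | cons h p => exact mem_biUnion ⟨p, by simpa using hp⟩ h.symm
    calc _ ≤ _ := (mk_le_mk_of_subset hsub).trans (mk_biUnion_le _ _)
      _ ≤ κ * κ := mul_le_mul' ih (ciSup_le' fun w => hdeg w)
      _ = κ := mul_eq_self hκ

theorem Connected.mk_le_of_mk_neighborSet_le {G : SimpleGraph V} (hG : G.Connected)
    {κ : Cardinal.{u}} (hκ : ℵ₀ ≤ κ) (hdeg : ∀ v, #(G.neighborSet v) ≤ κ) : #V ≤ κ := by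
  let r := hG.nonempty.some
  have hcover : (univ : Set V) = ⋃ n : ULift.{u} ℕ, {v | ∃ p : G.Walk v r, p.length = n.down} := by
    refine (eq_univ_of_forall fun v => ?_).symm
    obtain ⟨p⟩ := hG.preconnected v r
    exact mem_iUnion.2 ⟨⟨p.length⟩, p, rfl⟩
  rw [← mk_univ, hcover]
  refine (mk_iUnion_le _).trans ?_
  calc _ ≤ ℵ₀ * κ := mul_le_mul' (by simp) (ciSup_le' fun n => mk_setOf_walk_length_le hκ hdeg r _)
    _ = κ := aleph0_mul_eq hκ

namespace IsTree

variable {T : SimpleGraph V} (hT : T.IsTree)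

noncomputable def root : V := hT.connected.nonempty.some

noncomputable def pathToRoot (v : V) : T.Walk v hT.root :=
  (hT.existsUnique_path v hT.root).choose

noncomputable def depth (v : V) : ℕ := (hT.pathToRoot v).length

noncomputable def parent (v : V) : V := (hT.pathToRoot v).snd

def children (v : V) : Set V := {c | c ≠ hT.root ∧ hT.parent c = v}

theorem isPath_pathToRoot (v : V) : (hT.pathToRoot v).IsPath :=
  (hT.existsUnique_path v hT.root).choose_spec.1

theorem eq_pathToRoot {v : V} {p : T.Walk v hT.root} (hp : p.IsPath) : p = hT.pathToRoot v :=
  (hT.existsUnique_path v hT.root).choose_spec.2 p hp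

@[simp]
theorem parent_root : hT.parent hT.root = hT.root := by
  rw [parent, ← hT.eq_pathToRoot Walk.IsPath.nil]
  rfl

theorem adj_parent {v : V} (hv : v ≠ hT.root) : T.Adj v (hT.parent v) :=
  Walk.adj_snd (Walk.not_nil_of_ne hv)

theorem depth_parent_add_one {v : V} (hv : v ≠ hT.root) :
    hT.depth (hT.parent v) + 1 = hT.depth v := by
  have hnil := Walk.not_nil_of_ne (p := hT.pathToRoot v) hv
  rw [depth, depth, parent, ← hT.eq_pathToRoot (hT.isPath_pathToRoot v).tail,
    Walk.length_tail_add_one hnil]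

theorem parent_eq_or_parent_eq_of_adj {u v : V} (h : T.Adj u v) :
    hT.parent v = u ∨ hT.parent u = v := by
  by_cases hv : v ∈ (hT.pathToRoot u).support
  · exact .inr (hT.isAcyclic.eq_snd_of_adj_start (hT.isPath_pathToRoot u) h hv).symm
  · have hp : (Walk.cons h.symm (hT.pathToRoot u)).IsPath :=
      (hT.isPath_pathToRoot u).cons hv
    left
    rw [parent, ← hT.eq_pathToRoot hp, Walk.snd_cons]

theorem neighborSet_subset_insert_children (v : V) :
    T.neighborSet v ⊆ insert (hT.parent v) (hT.children v) := by
  intro c hc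
  rcases hT.parent_eq_or_parent_eq_of_adj hc with h | h
  · refine .inr ⟨?_, h⟩
    rintro rfl
    exact hc.ne (h.symm.trans hT.parent_root)
  · exact .inl h.symm

theorem mk_neighborSet_le_mk_children {v : V} (hv : ℵ₀ ≤ #(T.neighborSet v)) :
    #(T.neighborSet v) ≤ #(hT.children v) := by
  have hle : #(T.neighborSet v) ≤ #(hT.children v) + 1 :=
    (mk_le_mk_of_subset (hT.neighborSet_subset_insert_children v)).trans mk_insert_le
  have hinf : ℵ₀ ≤ #(hT.children v) := by
    by_contra! hfin
    exact (hle.trans_lt (add_lt_aleph0 hfin one_lt_aleph0)).not_ge hv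
  rwa [add_one_eq hinf] at hle

end IsTree
end SimpleGraph

/-- The attached vertices are joined to their parents; the others are the roots of the forest. -/
structure LabelledForest (V : Type u) where
  parent : V → V
  attached : Set V
  height : V → ℕ
  height_parent_lt : ∀ v ∈ attached, height (parent v) < height v
  label : V → Ordinal.{w}
  bijOn_label : ∀ v, BijOn label {c | c ∈ attached ∧ parent c = v} (Iio (label v))
  injOn_label : InjOn label attachedᶜ
  isSuccLimit_label : ∀ v ∉ attached, IsSuccLimit (label v)

namespace LabelledForest

variable {V : Type u} (F : LabelledForest.{u, w} V)

def children (v : V) : Set V := {c | c ∈ F.attached ∧ F.parent c = v}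

theorem parent_ne_of_mem_children {v c : V} (hc : c ∈ F.children v) (hv : v ∈ F.attached) :
    F.parent v ≠ c := by
  rintro rfl
  have h := F.height_parent_lt _ hc.1
  rw [hc.2] at h
  exact h.not_gt (F.height_parent_lt v hv)

def graph : SimpleGraph V where
  Adj a b := a ∈ F.children b ∨ b ∈ F.children a
  symm := ⟨fun _ _ => Or.symm⟩
  loopless := ⟨fun a h => by
    obtain ⟨ha, hpa⟩ := h.elim id id
    exact (F.height_parent_lt a ha).ne (congrArg F.height hpa)⟩

theorem mem_children_of_graph_adj {v c : V} (h : F.graph.Adj v c)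
    (hne : v ∈ F.attached → F.parent v ≠ c) : c ∈ F.children v :=
  h.resolve_left fun hv => hne hv.1 hv.2

variable {F}

def PreservesParentAt (φ : F.graph ≃g F.graph) (x : V) : Prop :=
  (x ∈ F.attached ↔ φ x ∈ F.attached) ∧ (x ∈ F.attached → φ (F.parent x) = F.parent (φ x))

theorem PreservesParentAt.symm {φ : F.graph ≃g F.graph} {x : V} (h : F.PreservesParentAt φ x) :
    F.PreservesParentAt φ.symm (φ x) := by
  refine ⟨by simpa using h.1.symm, fun hx => ?_⟩
  rw [← h.2 (h.1.2 hx), RelIso.symm_apply_apply, RelIso.symm_apply_apply]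

theorem PreservesParentAt.map_mem_children {φ : F.graph ≃g F.graph} {x c : V}
    (hx : F.PreservesParentAt φ x) (hc : c ∈ F.children x) : φ c ∈ F.children (φ x) := by
  refine F.mem_children_of_graph_adj (φ.map_adj_iff.2 (.inr hc)) fun hφx => ?_
  rw [← hx.2 (hx.1.2 hφx)]
  exact φ.injective.ne (F.parent_ne_of_mem_children hc (hx.1.2 hφx))

theorem preservesParentAt_of_mem_children {φ : F.graph ≃g F.graph} {x c : V}
    (hc : c ∈ F.children x) (hφc : φ c ∈ F.children (φ x)) : F.PreservesParentAt φ c :=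
  ⟨iff_of_true hc.1 hφc.1, fun _ => by rw [hc.2, hφc.2]⟩

theorem label_le_label_map (φ : F.graph ≃g F.graph) {x : V} (hx : F.PreservesParentAt φ x) :
    F.label x ≤ F.label (φ x) := by
  induction hl : F.label x using WellFoundedLT.induction generalizing x with
  | ind o ih =>
    subst hl
    by_contra! hlt
    obtain ⟨c, hc, hcl⟩ := (F.bijOn_label x).surjOn hlt
    have hφc := hx.map_mem_children hc
    have hle := ih _ ((F.bijOn_label x).mapsTo hc) (preservesParentAt_of_mem_children hc hφc) rfl
    exact ((F.bijOn_label (φ x)).mapsTo hφc).not_ge (hcl ▸ hle)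

theorem PreservesParentAt.label_map {φ : F.graph ≃g F.graph} {x : V}
    (hx : F.PreservesParentAt φ x) : F.label (φ x) = F.label x :=
  le_antisymm (by simpa using label_le_label_map φ.symm hx.symm) (label_le_label_map φ hx)

theorem label_map_of_mem_children {φ : F.graph ≃g F.graph} {x c : V}
    (hc : c ∈ F.children x) (hφc : φ c ∈ F.children (φ x)) : F.label (φ c) = F.label c :=
  (preservesParentAt_of_mem_children hc hφc).label_map

theorem map_not_mem_attached (φ : F.graph ≃g F.graph) {v : V} (hv : v ∉ F.attached) :
    φ v ∉ F.attached := by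
  -- If the root `v` went to an attached `w`, let `c₁` be the child of `v` sent to the parent of
  -- `w`. As `label v` is a limit, `v` has a child labelled `succ (label c₁)`, whose image is a
  -- child of `w`; so `w` has a child labelled `label c₁`, and its preimage can only be `c₁`.
  intro hw
  have mem_children_v {c : V} (h : F.graph.Adj v c) : c ∈ F.children v :=
    F.mem_children_of_graph_adj h (absurd · hv)
  set c₁ := φ.symm (F.parent (φ v)) with hc₁_def
  have hc₁ : c₁ ∈ F.children v := mem_children_v <| by
    simpa using φ.symm.map_adj_iff.2 (Or.inl ⟨hw, rfl⟩ : F.graph.Adj (φ v) (F.parent (φ v)))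
  have hlt : F.label c₁ < F.label v := (F.bijOn_label v).mapsTo hc₁
  obtain ⟨c₂, hc₂, hc₂l⟩ := (F.bijOn_label v).surjOn ((F.isSuccLimit_label v hv).succ_lt hlt)
  have hφc₂ : φ c₂ ∈ F.children (φ v) := by
    refine F.mem_children_of_graph_adj (φ.map_adj_iff.2 (.inr hc₂)) fun _ h => ?_
    have : c₂ = c₁ := by rw [hc₁_def, h, RelIso.symm_apply_apply]
    exact (lt_succ (F.label c₁)).ne (hc₂l ▸ congrArg F.label this).symm
  have hlt' : F.label c₁ < F.label (φ v) := calc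
    F.label c₁ < succ (F.label c₁) := lt_succ _
    _ = F.label (φ c₂) := by rw [label_map_of_mem_children hc₂ hφc₂, hc₂l]
    _ < F.label (φ v) := (F.bijOn_label (φ v)).mapsTo hφc₂
  obtain ⟨c', hc', hc'l⟩ := (F.bijOn_label (φ v)).surjOn hlt'
  have hc'' : φ.symm c' ∈ F.children v := mem_children_v <| by
    simpa using φ.symm.map_adj_iff.2 (Or.inr hc' : F.graph.Adj (φ v) c')
  have hc''c₁ : φ.symm c' = c₁ := (F.bijOn_label v).injOn hc'' hc₁ <| by
    rw [← hc'l, ← label_map_of_mem_children (φ := φ) hc'' (by rwa [RelIso.apply_symm_apply]),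
      RelIso.apply_symm_apply]
  refine F.parent_ne_of_mem_children hc' hw ?_
  rw [← φ.apply_symm_apply c', hc''c₁, hc₁_def, RelIso.apply_symm_apply]

theorem apply_eq_self_of_not_mem_attached (φ : F.graph ≃g F.graph) {v : V}
    (hv : v ∉ F.attached) : φ v = v :=
  have hφv := map_not_mem_attached φ hv
  F.injOn_label hφv hv (PreservesParentAt.label_map ⟨iff_of_false hv hφv, (absurd · hv)⟩)

theorem automorphism_apply (φ : F.graph ≃g F.graph) (v : V) : φ v = v := by
  induction hn : F.height v using Nat.strong_induction_on generalizing v with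
  | _ n ih =>
  by_cases hv : v ∈ F.attached
  · have hp : φ (F.parent v) = F.parent v := ih _ (hn ▸ F.height_parent_lt v hv) _ rfl
    have hpp : F.PreservesParentAt φ (F.parent v) := by
      refine ⟨by rw [hp], fun h => ?_⟩
      rw [hp, ih _ (hn ▸ (F.height_parent_lt _ h).trans (F.height_parent_lt v hv)) _ rfl]
    have hvc : v ∈ F.children (F.parent v) := ⟨hv, rfl⟩
    have hφv := hpp.map_mem_children hvc
    refine (F.bijOn_label _).injOn (hp ▸ hφv) hvc (label_map_of_mem_children hvc hφv)
  · exact apply_eq_self_of_not_mem_attached φ hv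

variable (F)

theorem graph_neighborSet_nonempty (v : V) : (F.graph.neighborSet v).Nonempty := by
  by_cases hv : v ∈ F.attached
  · exact ⟨F.parent v, .inl ⟨hv, rfl⟩⟩
  · have h0 : ⊥ ∈ Iio (F.label v) := (F.isSuccLimit_label v hv).bot_lt
    obtain ⟨c, hc, -⟩ := (F.bijOn_label v).surjOn h0
    exact ⟨c, .inr hc⟩

end LabelledForest

namespace SimpleGraph.IsTree

variable {V : Type u} {T : SimpleGraph V} (hT : T.IsTree) {κ : Ordinal.{w}}

/-- `embed v β` picks, below a vertex `v` of label `β`, the forest children of `v`, one of each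
label `i < β`. -/
structure ForestData (κ : Ordinal.{w}) where
  embed : ∀ (v : V) (β : Iio κ), Iio (β : Ordinal) ↪ hT.children v
  rootLabel : V → Iio κ
  rootLabel_injective : Injective rootLabel
  isSuccLimit_rootLabel : ∀ v, IsSuccLimit (rootLabel v : Ordinal)

namespace ForestData

variable {hT} (D : hT.ForestData κ)

open scoped Classical in
noncomputable def label (v : V) : Iio κ :=
  if _hv : v = hT.root then D.rootLabel v
  else if h : ∃ i, (D.embed (hT.parent v) (label (hT.parent v)) i : V) = v then
    ⟨h.choose, (mem_Iio.1 h.choose.2).trans (label (hT.parent v)).2⟩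
  else D.rootLabel v
termination_by hT.depth v
decreasing_by have := hT.depth_parent_add_one _hv; omega

def attached : Set V := {c | ∃ v i, (D.embed v (D.label v) i : V) = c}

theorem ne_root_of_mem_attached {c : V} (hc : c ∈ D.attached) : c ≠ hT.root := by
  obtain ⟨v, i, rfl⟩ := hc
  exact (D.embed v _ i).2.1

theorem label_of_not_mem_attached {c : V} (hc : c ∉ D.attached) : D.label c = D.rootLabel c := by
  rw [label]
  split_ifs with h₁ h₂
  · rfl
  · exact absurd ⟨_, _, h₂.choose_spec⟩ hc
  · rfl

theorem label_eq_of_embed_eq {v c : V} {i : Iio (D.label v : Ordinal)}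
    (h : (D.embed v (D.label v) i : V) = c) : (D.label c : Ordinal) = i := by
  obtain ⟨hc, rfl⟩ : c ∈ hT.children v := h ▸ (D.embed v _ i).2
  have hex : ∃ j, (D.embed (hT.parent c) (D.label (hT.parent c)) j : V) = c := ⟨i, h⟩
  rw [label, dif_neg hc, dif_pos hex]
  exact congrArg Subtype.val ((D.embed _ _).injective (Subtype.ext (hex.choose_spec.trans h.symm)))

theorem attached_inter_parent_eq_range (v : V) :
    {c | c ∈ D.attached ∧ hT.parent c = v} = range fun i => (D.embed v (D.label v) i : V) := by
  ext c
  constructor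
  · rintro ⟨⟨u, i, rfl⟩, rfl⟩
    rw [(D.embed u _ i).2.2]
    exact ⟨i, rfl⟩
  · rintro ⟨i, rfl⟩
    exact ⟨⟨v, i, rfl⟩, (D.embed v _ i).2.2⟩

noncomputable def toLabelledForest : LabelledForest.{u, w} V where
  parent := hT.parent
  attached := D.attached
  height := hT.depth
  height_parent_lt v hv := by
    have := hT.depth_parent_add_one (D.ne_root_of_mem_attached hv)
    omega
  label v := D.label v
  bijOn_label v := by
    rw [D.attached_inter_parent_eq_range]
    refine ⟨?_, ?_, fun o ho => ⟨_, ⟨⟨o, ho⟩, rfl⟩, D.label_eq_of_embed_eq rfl⟩⟩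
    · rintro _ ⟨i, rfl⟩
      simp [D.label_eq_of_embed_eq rfl]
    · rintro _ ⟨i, rfl⟩ _ ⟨j, rfl⟩ h
      dsimp only at h
      rw [D.label_eq_of_embed_eq rfl, D.label_eq_of_embed_eq rfl] at h
      rw [Subtype.ext h]
  injOn_label c hc c' hc' h := by
    dsimp only at h
    rw [D.label_of_not_mem_attached hc, D.label_of_not_mem_attached hc'] at h
    exact D.rootLabel_injective (Subtype.ext h)
  isSuccLimit_label c hc := by
    rw [D.label_of_not_mem_attached hc]
    exact D.isSuccLimit_rootLabel c

theorem graph_toLabelledForest_le : D.toLabelledForest.graph ≤ T := by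
  rintro a b (⟨ha, rfl⟩ | ⟨hb, rfl⟩)
  · exact hT.adj_parent (D.ne_root_of_mem_attached ha)
  · exact (hT.adj_parent (D.ne_root_of_mem_attached hb)).symm

end ForestData

end SimpleGraph.IsTree

theorem Ordinal.nonempty_Iio_embedding_of_card_le {β : Ordinal.{u}} {C : Type u}
    (h : β.card ≤ #C) : Nonempty (Iio β ↪ C) :=
  lift_mk_le'.1 (by rw [Cardinal.mk_Iio_ordinal, Cardinal.lift_lift, Cardinal.lift_le]; exact h)

theorem Cardinal.exists_injective_isSuccLimit_lt_ord_succ {V : Type u} {α : Cardinal.{u}}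
    (hα : ℵ₀ ≤ α) (hV : #V ≤ α) :
    ∃ f : V → Iio (succ α).ord, Injective f ∧ ∀ v, IsSuccLimit (f v : Ordinal) := by
  let t : V → Ordinal.{u} := Ordinal.typein WellOrderingRel
  refine ⟨fun v => ⟨ω * (t v + 1), ?_⟩, fun v w h => ?_, fun v => ?_⟩
  · rw [mem_Iio, lt_ord, Ordinal.card_mul, Ordinal.card_add, Ordinal.card_omega0,
      Ordinal.card_one, lt_succ_iff]
    calc ℵ₀ * ((t v).card + 1) ≤ ℵ₀ * (α + 1) := by
          gcongr
          exact (mk_subtype_le _).trans hV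
      _ = α := by rw [add_one_eq hα, aleph0_mul_eq hα]
  · have h' := mul_left_cancel₀ Ordinal.omega0_ne_zero (congrArg Subtype.val h)
    rw [← succ_eq_add_one, ← succ_eq_add_one] at h'
    exact Ordinal.typein_injective _ (succ_injective h')
  · exact Ordinal.isSuccLimit_mul_left Ordinal.isSuccLimit_omega0 (by simp)

theorem SimpleGraph.IsTree.nonempty_forestData {V : Type u} {T : SimpleGraph V} (hT : T.IsTree)
    {α : Cardinal.{u}} (hα : ℵ₀ ≤ α) (hreg : ∀ v, #(T.neighborSet v) = α) :
    Nonempty (hT.ForestData (succ α).ord) := by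
  obtain ⟨f, hf, hlim⟩ := exists_injective_isSuccLimit_lt_ord_succ hα
    (hT.connected.mk_le_of_mk_neighborSet_le hα fun v => (hreg v).le)
  have hemb (v : V) (β : Iio (succ α).ord) : Nonempty (Iio (β : Ordinal) ↪ hT.children v) := by
    refine Ordinal.nonempty_Iio_embedding_of_card_le ?_
    calc (β : Ordinal).card ≤ α := lt_succ_iff.1 (lt_ord.1 β.2)
      _ = #(T.neighborSet v) := (hreg v).symm
      _ ≤ #(hT.children v) := hT.mk_neighborSet_le_mk_children (hreg v ▸ hα)
  exact ⟨⟨fun v β => (hemb v β).some, f, hf, hlim⟩⟩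

/-- Every α-regular tree (α infinite) has an asymmetric spanning forest with no isolated
vertices. -/
theorem stmt_5 {V : Type u} (α : Cardinal.{u}) (hα : ℵ₀ ≤ α)
    (T : SimpleGraph V) (hTc : T.Connected) (hTa : T.IsAcyclic)
    (hreg : ∀ v : V, #(T.neighborSet v) = α) :
    ∃ F : SimpleGraph V, F ≤ T ∧ F.IsAcyclic ∧
      (∀ φ : F ≃g F, ∀ x, φ x = x) ∧ (∀ v, (F.neighborSet v).Nonempty) := by
  obtain ⟨D⟩ := SimpleGraph.IsTree.nonempty_forestData ⟨hTc, hTa⟩ hα hreg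
  have hle := D.graph_toLabelledForest_le
  exact ⟨_, hle, hTa.anti hle, D.toLabelledForest.automorphism_apply,
    D.toLabelledForest.graph_neighborSet_nonempty⟩
end

section
/- Let G be a connected α-regular graph for an infinite cardinal α. Then the distinguishing index of G is at most 2; that is, there is a 2-coloring of the edges of G preserved only by the identity automorphism. -/
open Cardinal

universe u

/-- `G` has a distinguishing edge coloring with `n` colors, i.e. `D'(G) ≤ n`:
an edge coloring with `n` colors such that the only automorphism of `G` mapping each edge
to an edge of the same color is the identity. -/
def DistIndexLE {V : Type u} (G : SimpleGraph V) (n : ℕ) : Prop :=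
  ∃ c : Sym2 V → Fin n, ∀ φ : G ≃g G,
    (∀ u v : V, G.Adj u v → c s(φ u, φ v) = c s(u, v)) → ∀ x, φ x = x

/-!
A connected graph whose vertices all have `α ≥ ℵ₀` neighbours has exactly `α` vertices. Well-order
the vertices in type `α`; a greedy transfinite recursion (each step avoids fewer than `α` used
vertices) gives every vertex `a` distinct later neighbours `child a q`, one for each
`q ∈ α ×ₗ ℕ`. Labels are then assigned along the well-order: the children `child a q` with
`q < lab a` are red and labelled `q`, every other vertex is a red root labelled `(idx z, 0)`.

An automorphism of the red graph preserves labels, by induction on the label: the red neighbours of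
`a` below `lab a` carry exactly the labels `q < lab a`, at most one red neighbour (the parent) lies
above, and root labels have no immediate predecessor, so a vertex labelled by a successor has a
parent. Distinct roots have distinct labels, so the roots are fixed, and going up the well-order
each red child is fixed as the unique child of its fixed parent with its label. Colouring the red
edges therefore gives a distinguishing 2-colouring.
-/

open Set Function
open scoped Ordinal

theorem Cardinal.mk_sdiff_eq_of_lt {α : Type*} {s t : Set α} (hs : ℵ₀ ≤ #s) (ht : #t < #s) :
    #(s \ t : Set α) = #s := by
  refine le_antisymm (mk_le_mk_of_subset sdiff_subset) (not_lt.1 fun h => ?_)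
  exact (le_mk_sdiff_add_mk s t).not_gt (add_lt_of_lt hs h ht)

theorem exists_injective_forall_mem_of_mk_Iio_lt {ι β : Type u} [LinearOrder ι] [WellFoundedLT ι]
    (s : ι → Set β) (hs : ∀ i, #(Iio i) < #(s i)) :
    ∃ f : ι → β, Injective f ∧ ∀ i, f i ∈ s i := by
  have hfresh : ∀ i (t : Set β), #t ≤ #(Iio i) → (s i \ t).Nonempty := fun i t ht =>
    sdiff_nonempty_of_mk_lt_mk (ht.trans_lt (hs i))
  let f : ι → β := wellFounded_lt.fix fun i g =>
    (hfresh i (range fun j : Iio i => g j j.2) mk_range_le).some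
  have hf : ∀ i, f i ∈ s i \ range fun j : Iio i => f j := fun i => by
    rw [show f i = _ from wellFounded_lt.fix_eq _ i]
    exact Nonempty.some_mem _
  refine ⟨f, fun i j hij => ?_, fun i => (hf i).1⟩
  by_contra hne
  rcases lt_or_gt_of_ne hne with h | h
  · exact (hf j).2 ⟨⟨i, h⟩, hij⟩
  · exact (hf i).2 ⟨⟨j, h⟩, hij.symm⟩

theorem SimpleGraph.mk_setOf_walk_length_eq_le {V : Type u} (G : SimpleGraph V) {α : Cardinal.{u}}
    (hα : ℵ₀ ≤ α) (hdeg : ∀ v, #(G.neighborSet v) ≤ α) (n : ℕ) (v : V) :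
    #{w | ∃ p : G.Walk v w, p.length = n} ≤ α := by
  induction n generalizing v with
  | zero =>
    refine (mk_le_mk_of_subset (t := {v}) ?_).trans (by simpa using one_le_aleph0.trans hα)
    rintro w ⟨p, hp⟩
    exact (Walk.eq_of_length_eq_zero hp).symm
  | succ n ih =>
    have hsub : {w | ∃ p : G.Walk v w, p.length = n + 1} ⊆
        ⋃ u : G.neighborSet v, {w | ∃ p : G.Walk u w, p.length = n} := by
      rintro w ⟨p, hp⟩
      cases p with
      | nil => simp at hp
      | @cons _ u _ huv p => exact mem_iUnion.2 ⟨⟨u, huv⟩, p, by simpa using hp⟩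
    calc _ ≤ _ := mk_le_mk_of_subset hsub
      _ ≤ #(G.neighborSet v) * ⨆ u : G.neighborSet v, #{w | ∃ p : G.Walk u w, p.length = n} :=
        mk_iUnion_le _
      _ ≤ α * α := mul_le_mul' (hdeg v) (ciSup_le' fun u => ih u)
      _ = α := mul_eq_self hα

theorem SimpleGraph.Connected.mk_eq_of_mk_neighborSet_eq {V : Type u} {G : SimpleGraph V}
    (hG : G.Connected) {α : Cardinal.{u}} (hα : ℵ₀ ≤ α) (hdeg : ∀ v, #(G.neighborSet v) = α) :
    #V = α := by
  obtain ⟨v⟩ := hG.nonempty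
  refine le_antisymm ?_ (hdeg v ▸ mk_set_le _)
  have huniv : ⋃ n : ULift.{u} ℕ, {w | ∃ p : G.Walk v w, p.length = n.down} = Set.univ :=
    eq_univ_of_forall fun w =>
      mem_iUnion.2 ⟨⟨(hG.preconnected v w).some.length⟩, (hG.preconnected v w).some, rfl⟩
  calc #V = #(⋃ n : ULift.{u} ℕ, {w | ∃ p : G.Walk v w, p.length = n.down}) := by
        rw [huniv, mk_univ]
    _ ≤ #(ULift.{u} ℕ) * ⨆ n : ULift.{u} ℕ, #{w | ∃ p : G.Walk v w, p.length = n.down} :=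
      mk_iUnion_le _
    _ ≤ ℵ₀ * α := mul_le_mul' (by simp) <|
      ciSup_le' fun n => G.mk_setOf_walk_length_eq_le hα (fun v => (hdeg v).le) _ v
    _ = α := aleph0_mul_eq hα

/-- `child a q` is the `q`-th child of `a`; vertices outside the range of `child` are roots. -/
structure IndexedForest (V I : Type*) [LinearOrder I] where
  idx : V → I
  child : V → I ×ₗ ℕ → V
  injective_idx : Injective idx
  injective_child : Injective (uncurry child)
  idx_lt_idx_child : ∀ a q, idx a < idx (child a q)

theorem Prod.Lex.not_covBy_toLex_zero {I : Type*} [Preorder I] (γ : I ×ₗ ℕ) (x : I) :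
    ¬ γ ⋖ toLex (x, 0) := fun h => by
  have hγx : (ofLex γ).1 < x := by
    rcases Prod.Lex.lt_iff.1 h.lt with h | ⟨-, h⟩
    · exact h
    · exact absurd h (Nat.not_lt_zero _)
  refine h.2 (c := toLex ((ofLex γ).1, (ofLex γ).2 + 1)) ?_ (Prod.Lex.lt_iff.2 (Or.inl hγx))
  exact Prod.Lex.lt_iff.2 (Or.inr ⟨rfl, Nat.lt_succ_self _⟩)

namespace IndexedForest

variable {V I : Type*} [LinearOrder I] (F : IndexedForest V I)

noncomputable def parentSlot (z : V) : Option (V × I ×ₗ ℕ) := partialInv (uncurry F.child) z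

lemma parentSlot_child (a : V) (q : I ×ₗ ℕ) : F.parentSlot (F.child a q) = some (a, q) :=
  partialInv_left F.injective_child (a, q)

lemma child_eq_of_parentSlot_eq {z a : V} {q : I ×ₗ ℕ} (h : F.parentSlot z = some (a, q)) :
    F.child a q = z :=
  (F.injective_child.isPartialInv _ _).1 h

def rootLabel (z : V) : I ×ₗ ℕ := toLex (F.idx z, 0)

variable [WellFoundedLT I]

noncomputable def lab : V → I ×ₗ ℕ :=
  (InvImage.wf F.idx wellFounded_lt).fix fun z rec =>
    match h : F.parentSlot z with
    | some (a, q) =>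
      if q < rec a (F.child_eq_of_parentSlot_eq h ▸ F.idx_lt_idx_child a q) then q
      else F.rootLabel z
    | none => F.rootLabel z

lemma lab_of_parentSlot_eq_some {z a : V} {q : I ×ₗ ℕ} (h : F.parentSlot z = some (a, q)) :
    F.lab z = if q < F.lab a then q else F.rootLabel z := by
  rw [lab, WellFounded.fix_eq]
  split
  · next h' => cases h.symm.trans h'; rfl
  · next h' => cases h.symm.trans h'

lemma lab_of_parentSlot_eq_none {z : V} (h : F.parentSlot z = none) : F.lab z = F.rootLabel z := by
  rw [lab, WellFounded.fix_eq]
  split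
  · next h' => cases h.symm.trans h'
  · rfl

def IsRedChild (a z : V) : Prop := ∃ q < F.lab a, F.child a q = z

lemma lab_child {a : V} {q : I ×ₗ ℕ} (hq : q < F.lab a) : F.lab (F.child a q) = q := by
  rw [F.lab_of_parentSlot_eq_some (F.parentSlot_child a q), if_pos hq]

lemma lab_of_forall_not_isRedChild {z : V} (hz : ∀ a, ¬ F.IsRedChild a z) :
    F.lab z = F.rootLabel z := by
  cases hs : F.parentSlot z with
  | none => exact F.lab_of_parentSlot_eq_none hs
  | some p =>
    rw [F.lab_of_parentSlot_eq_some hs,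
      if_neg fun hq => hz p.1 ⟨p.2, hq, F.child_eq_of_parentSlot_eq hs⟩]

namespace IsRedChild

variable {F} {a b z : V}

lemma lab_lt (h : F.IsRedChild a z) : F.lab z < F.lab a := by
  obtain ⟨q, hq, rfl⟩ := h
  rwa [F.lab_child hq]

lemma idx_lt (h : F.IsRedChild a z) : F.idx a < F.idx z := by
  obtain ⟨q, -, rfl⟩ := h
  exact F.idx_lt_idx_child a q

lemma ne (h : F.IsRedChild a z) : a ≠ z := fun he => (he ▸ h.idx_lt).false

lemma left_unique (ha : F.IsRedChild a z) (hb : F.IsRedChild b z) : a = b := by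
  obtain ⟨q, -, rfl⟩ := ha
  obtain ⟨r, -, he⟩ := hb
  exact congrArg Prod.fst (F.injective_child (a₁ := (a, q)) (a₂ := (b, r)) he.symm)

lemma eq_of_lab_eq {z' : V} (h : F.IsRedChild a z) (h' : F.IsRedChild a z')
    (hl : F.lab z = F.lab z') : z = z' := by
  obtain ⟨q, hq, rfl⟩ := h
  obtain ⟨r, hr, rfl⟩ := h'
  rw [F.lab_child hq, F.lab_child hr] at hl
  rw [hl]

end IsRedChild

def redGraph : SimpleGraph V := SimpleGraph.fromRel F.IsRedChild

lemma redGraph_adj {a z : V} : F.redGraph.Adj a z ↔ F.IsRedChild a z ∨ F.IsRedChild z a := by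
  rw [redGraph, SimpleGraph.fromRel_adj, and_iff_right_iff_imp]
  rintro (h | h)
  exacts [h.ne, h.ne.symm]

lemma redGraph_le {G : SimpleGraph V} (hG : ∀ a q, G.Adj a (F.child a q)) : F.redGraph ≤ G := by
  intro a z h
  rcases F.redGraph_adj.1 h with ⟨q, -, rfl⟩ | ⟨q, -, rfl⟩
  exacts [hG a q, (hG z q).symm]

lemma lab_ne_of_adj {a z : V} (h : F.redGraph.Adj a z) : F.lab z ≠ F.lab a := by
  rcases F.redGraph_adj.1 h with h | h
  exacts [h.lab_lt.ne, h.lab_lt.ne']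

lemma isRedChild_of_adj_of_lab_lt {a z : V} (h : F.redGraph.Adj a z) (hl : F.lab a < F.lab z) :
    F.IsRedChild z a :=
  (F.redGraph_adj.1 h).resolve_left fun h' => h'.lab_lt.not_gt hl

def redAbove (a : V) (γ : I ×ₗ ℕ) : Set V := {w | F.redGraph.Adj a w ∧ γ ≤ F.lab w}

lemma redAbove_lab_subsingleton (a : V) : (F.redAbove a (F.lab a)).Subsingleton := by
  rintro w ⟨hw, hlw⟩ w' ⟨hw', hlw'⟩
  exact (F.isRedChild_of_adj_of_lab_lt hw (hlw.lt_of_ne (F.lab_ne_of_adj hw).symm)).left_unique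
    (F.isRedChild_of_adj_of_lab_lt hw' (hlw'.lt_of_ne (F.lab_ne_of_adj hw').symm))

lemma redAbove_nontrivial {a : V} {γ : I ×ₗ ℕ} (h : γ < F.lab a) :
    (F.redAbove a γ).Nontrivial := by
  have hγ : F.child a γ ∈ F.redAbove a γ :=
    ⟨F.redGraph_adj.2 (Or.inl ⟨γ, h, rfl⟩), (F.lab_child h).ge⟩
  by_cases hcov : γ ⋖ F.lab a
  · -- `lab a` is a successor, so it is not a root label and `a` has a red parent above it
    obtain ⟨b, hb⟩ : ∃ b, F.IsRedChild b a := by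
      by_contra! hroot
      rw [F.lab_of_forall_not_isRedChild hroot] at hcov
      exact Prod.Lex.not_covBy_toLex_zero _ _ hcov
    refine ⟨_, hγ, b, ⟨F.redGraph_adj.2 (Or.inr hb), (h.trans hb.lab_lt).le⟩, fun he => ?_⟩
    have := hb.lab_lt
    rw [← he, F.lab_child h] at this
    exact this.not_gt h
  · obtain ⟨q, hγq, hq⟩ : ∃ q, γ < q ∧ q < F.lab a := by
      by_contra! hq
      exact hcov ⟨h, fun q h₁ h₂ => (hq q h₁).not_gt h₂⟩
    refine ⟨_, hγ, F.child a q, ⟨F.redGraph_adj.2 (Or.inl ⟨q, hq, rfl⟩), ?_⟩, fun he => ?_⟩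
    · rw [F.lab_child hq]; exact hγq.le
    · have := congrArg F.lab he
      rw [F.lab_child h, F.lab_child hq] at this
      exact hγq.ne this

theorem lab_iso_apply (φ : F.redGraph ≃g F.redGraph) (y : V) : F.lab (φ y) = F.lab y := by
  suffices ∀ γ y, F.lab y = γ → F.lab (φ y) = γ from this _ y rfl
  intro γ
  induction γ using WellFoundedLT.induction with
  | _ γ ih =>
  intro y hy
  rcases lt_trichotomy (F.lab (φ y)) γ with hlt | heq | hgt
  · have hz := F.lab_child (hy ▸ hlt)
    have hadj : F.redGraph.Adj y (F.child y (F.lab (φ y))) :=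
      F.redGraph_adj.2 (Or.inl ⟨_, hy ▸ hlt, rfl⟩)
    exact absurd (ih _ hlt _ hz) (F.lab_ne_of_adj (φ.map_adj_iff.2 hadj))
  · exact heq
  · -- `y` has at most one red neighbour above `γ`, its parent, while `φ y` has two, and by
    -- induction `φ⁻¹` maps those of `φ y` to those of `y`
    have hsub : φ.symm '' F.redAbove (φ y) γ ⊆ F.redAbove y γ := by
      rintro _ ⟨w, ⟨hadj, hw⟩, rfl⟩
      refine ⟨by simpa using φ.symm.map_adj_iff.2 hadj, not_lt.1 fun hlt => ?_⟩
      have := ih _ hlt _ rfl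
      rw [RelIso.apply_symm_apply] at this
      exact (this ▸ hlt).not_ge hw
    exact absurd ((hy ▸ F.redAbove_lab_subsingleton y).anti hsub)
      ((F.redAbove_nontrivial hgt).image φ.symm.injective).not_subsingleton

theorem iso_apply_eq (φ : F.redGraph ≃g F.redGraph) (z : V) : φ z = z := by
  induction z using (InvImage.wf F.idx wellFounded_lt).induction with
  | _ z ih =>
  by_cases hz : ∃ a, F.IsRedChild a z
  · obtain ⟨a, ha⟩ := hz
    have hadj : F.redGraph.Adj a (φ z) := by
      simpa [ih a ha.idx_lt] using φ.map_adj_iff.2 (F.redGraph_adj.2 (Or.inl ha))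
    have hφz := F.isRedChild_of_adj_of_lab_lt hadj.symm (by rw [F.lab_iso_apply]; exact ha.lab_lt)
    exact hφz.eq_of_lab_eq ha (F.lab_iso_apply φ z)
  · rw [not_exists] at hz
    have hφz : ∀ b, ¬ F.IsRedChild b (φ z) := fun b hb => by
      have hadj : F.redGraph.Adj (φ.symm b) z := by
        simpa using φ.symm.map_adj_iff.2 (F.redGraph_adj.2 (Or.inl hb))
      refine hz _ (F.isRedChild_of_adj_of_lab_lt hadj.symm ?_)
      rw [F.lab_iso_apply, ← F.lab_iso_apply φ z]
      exact hb.lab_lt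
    have := F.lab_iso_apply φ z
    rw [F.lab_of_forall_not_isRedChild hφz, F.lab_of_forall_not_isRedChild hz] at this
    exact F.injective_idx (congrArg Prod.fst (toLex.injective this))

end IndexedForest

theorem SimpleGraph.exists_indexedForest {V I : Type u} [LinearOrder I] [WellFoundedLT I]
    (G : SimpleGraph V) (hI : ord #I = typeLT I) (hVI : #V = #I) (hV : ℵ₀ ≤ #V)
    (hdeg : ∀ v, #(G.neighborSet v) = #V) :
    ∃ F : IndexedForest V I, ∀ a q, G.Adj a (F.child a q) := by
  obtain ⟨idx⟩ := Cardinal.eq.1 hVI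
  obtain ⟨p⟩ : Nonempty (I ≃ V × I ×ₗ ℕ) := Cardinal.eq.1 <| by
    simp only [mk_prod, Cardinal.mk_congr toLex.symm, mk_nat, lift_id, lift_uzero, lift_aleph0,
      ← hVI, mul_aleph0_eq hV, mul_eq_self hV]
  let s : I → Set V := fun i => {z | G.Adj (p i).1 z ∧ idx (p i).1 < idx z}
  have hs : ∀ i, #(Iio i) < #(s i) := fun i => by
    have hsmall : #(idx ⁻¹' Iic (idx (p i).1)) < #(G.neighborSet (p i).1) :=
      (mk_preimage_of_injective _ _ idx.injective).trans_lt <| (hdeg _).symm ▸ hVI ▸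
        mk_Iic_lt _ hI (hVI ▸ hV)
    have : s i = G.neighborSet (p i).1 \ idx ⁻¹' Iic (idx (p i).1) := by
      ext z; simp [s, not_le]
    rw [this, Cardinal.mk_sdiff_eq_of_lt ((hdeg _).symm ▸ hV) hsmall, hdeg, hVI]
    exact mk_Iio_lt i hI
  obtain ⟨f, hf, hfs⟩ := exists_injective_forall_mem_of_mk_Iio_lt s hs
  refine ⟨⟨idx, fun a q => f (p.symm (a, q)), idx.injective, hf.comp p.symm.injective,
    fun a q => ?_⟩, fun a q => ?_⟩
  · simpa using (hfs (p.symm (a, q))).2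
  · simpa using (hfs (p.symm (a, q))).1

theorem SimpleGraph.exists_le_forall_iso_apply_eq {V : Type u} (G : SimpleGraph V)
    (hV : ℵ₀ ≤ #V) (hdeg : ∀ v, #(G.neighborSet v) = #V) :
    ∃ R ≤ G, ∀ φ : R ≃g R, ∀ x, φ x = x := by
  obtain ⟨F, hF⟩ := G.exists_indexedForest (I := (#V).ord.ToType) (by simp) (by simp) hV hdeg
  exact ⟨F.redGraph, F.redGraph_le hF, F.iso_apply_eq⟩

theorem distIndexLE_two_of_le {V : Type u} {G R : SimpleGraph V} (hRG : R ≤ G)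
    (hR : ∀ φ : R ≃g R, ∀ x, φ x = x) : DistIndexLE G 2 := by
  classical
  refine ⟨fun e => if e ∈ R.edgeSet then 1 else 0, fun φ hφ => hR ⟨φ.toEquiv, fun {u v} => ?_⟩⟩
  by_cases huv : G.Adj u v
  · have := hφ u v huv
    by_cases h₁ : R.Adj (φ u) (φ v) <;> by_cases h₂ : R.Adj u v <;> simp_all
  · exact iff_of_false (fun h => huv (φ.map_adj_iff.1 (hRG h))) fun h => huv (hRG h)

/-- If `G` is a connected α-regular graph for an infinite cardinal α, then `D'(G) ≤ 2`. -/
theorem stmt_6 {V : Type u} (α : Cardinal.{u}) (hα : ℵ₀ ≤ α)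
    (G : SimpleGraph V) (hGc : G.Connected)
    (hreg : ∀ v : V, #(G.neighborSet v) = α) :
    DistIndexLE G 2 := by
  have hV : #V = α := hGc.mk_eq_of_mk_neighborSet_eq hα hreg
  obtain ⟨R, hRG, hR⟩ := G.exists_le_forall_iso_apply_eq (hV ▸ hα) fun v => (hreg v).trans hV.symm
  exact distIndexLE_two_of_le hRG hR
end

section
/- Let α < β be infinite cardinals. Every spanning forest of the complete bipartite graph K_{α,β} has either β isolated vertices or β leaves; in either case the forest admits a nontrivial automorphism. Hence K_{α,β} has no asymmetric spanning forest. -/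
open Cardinal

universe u

/-- An involutive adjacency-preserving permutation is a graph automorphism. -/
def swapIso {X : Type u} (F : SimpleGraph X) (σ : Equiv.Perm X)
    (hfwd : ∀ x y, F.Adj x y → F.Adj (σ x) (σ y)) (hinv : ∀ x, σ (σ x) = x) : F ≃g F where
  toEquiv := σ
  map_rel_iff' := by
    intro x y
    constructor
    · intro h
      have := hfwd _ _ h
      rwa [hinv, hinv] at this
    · exact hfwd x y

/-- Let α < β be infinite cardinals.  Every spanning forest of `K_{α,β}` has either β
isolated vertices or β leaves; in either case it admits a nontrivial automorphism, so
`K_{α,β}` has no asymmetric spanning forest. -/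
theorem stmt_11 {V W : Type u} (α β : Cardinal.{u}) (hα : ℵ₀ ≤ α) (hαβ : α < β)
    (hV : #V = α) (hW : #W = β)
    (F : SimpleGraph (V ⊕ W)) (hFG : F ≤ completeBipartiteGraph V W)
    (hFa : F.IsAcyclic) :
    (#{x : V ⊕ W // F.neighborSet x = ∅} = β ∨
      #{x : V ⊕ W // #(F.neighborSet x) = 1} = β) ∧
    ∃ φ : F ≃g F, ∃ x, φ x ≠ x := by
  classical
  have hβ : ℵ₀ ≤ β := hα.trans hαβ.le
  have hVW : #(V ⊕ W) = β := by
    rw [Cardinal.mk_sum, Cardinal.lift_id, Cardinal.lift_id, hV, hW,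
      Cardinal.add_eq_max hα, max_eq_right hαβ.le]
  -- neighbors of right vertices are left vertices
  have hnb : ∀ (w : W) (y : V ⊕ W), F.Adj (Sum.inr w) y → ∃ v : V, y = Sum.inl v := by
    intro w y h
    have h2 := hFG h
    rcases y with v | w'
    · exact ⟨v, rfl⟩
    · simp at h2
  set A : Set W := {w | F.neighborSet (Sum.inr w) = ∅} with hA_def
  set B : Set W := {w | #(F.neighborSet (Sum.inr w)) = 1} with hB_def
  -- vertices of W of degree ≥ 2 are at most α many
  have hC : #{w : W // w ∉ A ∧ w ∉ B} ≤ α := by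
    have key : ∀ w : {w : W // w ∉ A ∧ w ∉ B}, ∃ p : V × V,
        p.1 ≠ p.2 ∧ F.Adj (Sum.inr w.1) (Sum.inl p.1) ∧ F.Adj (Sum.inr w.1) (Sum.inl p.2) := by
      rintro ⟨w, h0, h1⟩
      have hne : (F.neighborSet (Sum.inr w)).Nonempty := Set.nonempty_iff_ne_empty.mpr h0
      obtain ⟨a, ha⟩ := hne
      have : ∃ b ∈ F.neighborSet (Sum.inr w), b ≠ a := by
        by_contra hcon
        push_neg at hcon
        have : F.neighborSet (Sum.inr w) = {a} := by
          apply Set.eq_singleton_iff_unique_mem.mpr ⟨ha, hcon⟩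
        exact h1 (by rw [hB_def]; simp only [Set.mem_setOf_eq]; rw [this]; simp)
      obtain ⟨b, hb, hba⟩ := this
      obtain ⟨va, hva⟩ := hnb w a ha
      obtain ⟨vb, hvb⟩ := hnb w b hb
      refine ⟨(va, vb), ?_, ?_, ?_⟩
      · intro h
        apply hba
        rw [hva, hvb]
        exact congrArg Sum.inl (show va = vb from h).symm
      · rw [← hva]; exact ha
      · rw [← hvb]; exact hb
    choose f hf using key
    have hupath := SimpleGraph.isAcyclic_iff_path_unique.mp hFa
    have finj : Function.Injective f := by
      intro w w' h
      by_contra hne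
      have hww' : (w : W) ≠ (w' : W) := fun h' => hne (Subtype.ext h')
      have hirr : (Sum.inr (w : W) : V ⊕ W) ≠ Sum.inr (w' : W) := by
        simp [hww']
      obtain ⟨hv12, ha1, ha2⟩ := hf w
      obtain ⟨hv12', hb1, hb2⟩ := hf w'
      rw [← h] at hb1 hb2
      let p1 : F.Path (Sum.inr (w : W)) (Sum.inr (w' : W)) :=
        ⟨SimpleGraph.Walk.cons ha1 (SimpleGraph.Walk.cons hb1.symm SimpleGraph.Walk.nil), by
          simp [SimpleGraph.Walk.isPath_def, hww']⟩
      let p2 : F.Path (Sum.inr (w : W)) (Sum.inr (w' : W)) :=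
        ⟨SimpleGraph.Walk.cons ha2 (SimpleGraph.Walk.cons hb2.symm SimpleGraph.Walk.nil), by
          simp [SimpleGraph.Walk.isPath_def, hww']⟩
      have := congrArg (fun p : F.Path (Sum.inr (w : W)) (Sum.inr (w' : W)) =>
        p.1.support) (hupath p1 p2)
      simp [p1, p2, SimpleGraph.Walk.support_cons] at this
      exact hv12 this
    calc #{w : W // w ∉ A ∧ w ∉ B} ≤ #(V × V) := Cardinal.mk_le_of_injective finj
      _ = α := by
          simp only [Cardinal.mk_prod, Cardinal.lift_id, hV]
          exact Cardinal.mul_eq_self hα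
  -- hence β isolated or β leaf vertices within W
  have hAB : #A = β ∨ #B = β := by
    by_contra hcon
    push_neg at hcon
    have hAlt : #A < β := lt_of_le_of_ne (hW ▸ Cardinal.mk_set_le A) hcon.1
    have hBlt : #B < β := lt_of_le_of_ne (hW ▸ Cardinal.mk_set_le B) hcon.2
    have hClt : #{w : W // w ∉ A ∧ w ∉ B} < β := hC.trans_lt hαβ
    let g : W → ↥A ⊕ (↥B ⊕ {w : W // w ∉ A ∧ w ∉ B}) := fun w =>
      if h : w ∈ A then Sum.inl ⟨w, h⟩
      else if h' : w ∈ B then Sum.inr (Sum.inl ⟨w, h'⟩)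
      else Sum.inr (Sum.inr ⟨w, h, h'⟩)
    have ginj : Function.Injective g := by
      intro x y hxy
      simp only [g] at hxy
      split_ifs at hxy <;> simp_all
    have : β ≤ #A + (#B + #{w : W // w ∉ A ∧ w ∉ B}) := by
      calc β = #W := hW.symm
        _ ≤ #(↥A ⊕ (↥B ⊕ {w : W // w ∉ A ∧ w ∉ B})) := Cardinal.mk_le_of_injective ginj
        _ = #A + (#B + #{w : W // w ∉ A ∧ w ∉ B}) := by
            simp [Cardinal.mk_sum, Cardinal.lift_id]
    exact absurd this (not_le.mpr (Cardinal.add_lt_of_lt hβ hAlt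
      (Cardinal.add_lt_of_lt hβ hBlt hClt)))
  rcases hAB with hAβ | hBβ
  · -- β isolated vertices
    constructor
    · left
      apply le_antisymm
      · exact (Cardinal.mk_subtype_le _).trans_eq hVW
      · rw [← hAβ]
        exact Cardinal.mk_le_of_injective (f := fun w : ↥A => (⟨Sum.inr w.1, w.2⟩ :
          {x : V ⊕ W // F.neighborSet x = ∅}))
          (by intro x y h; simpa [Subtype.ext_iff] using h)
    · have : Nontrivial ↥A := Cardinal.one_lt_iff_nontrivial.mp
        (by rw [hAβ]; exact Cardinal.one_lt_aleph0.trans_le hβ)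
      obtain ⟨a, b, hab⟩ := exists_pair_ne ↥A
      have hab' : (Sum.inr a.1 : V ⊕ W) ≠ Sum.inr b.1 := by
        simp only [ne_eq, Sum.inr.injEq]
        exact fun h => hab (Subtype.ext h)
      set σ := Equiv.swap (Sum.inr a.1 : V ⊕ W) (Sum.inr b.1) with hσ
      have hisol : ∀ z : V ⊕ W, (z = Sum.inr a.1 ∨ z = Sum.inr b.1) → ∀ y, ¬ F.Adj z y := by
        rintro z (rfl | rfl) y hy
        · have ha := a.2
          simp only [hA_def, Set.mem_setOf_eq] at ha
          have : y ∈ F.neighborSet (Sum.inr a.1) := hy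
          rw [ha] at this
          exact this
        · have hb := b.2
          simp only [hA_def, Set.mem_setOf_eq] at hb
          have : y ∈ F.neighborSet (Sum.inr b.1) := hy
          rw [hb] at this
          exact this
      have hfwd : ∀ x y, F.Adj x y → F.Adj (σ x) (σ y) := by
        intro x y hxy
        have hx1 : x ≠ Sum.inr a.1 := fun h => hisol x (Or.inl h) y hxy
        have hx2 : x ≠ Sum.inr b.1 := fun h => hisol x (Or.inr h) y hxy
        have hy1 : y ≠ Sum.inr a.1 := fun h => hisol y (Or.inl h) x hxy.symm
        have hy2 : y ≠ Sum.inr b.1 := fun h => hisol y (Or.inr h) x hxy.symm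
        rw [hσ, Equiv.swap_apply_of_ne_of_ne hx1 hx2, Equiv.swap_apply_of_ne_of_ne hy1 hy2]
        exact hxy
      exact ⟨swapIso F σ hfwd (fun x => Equiv.swap_apply_self _ _ x),
        Sum.inr a.1, by
          simp only [swapIso, hσ, RelIso.coe_fn_mk, Equiv.coe_fn_mk, Equiv.swap_apply_left]
          exact hab'.symm⟩
  · -- β leaves
    constructor
    · right
      apply le_antisymm
      · exact (Cardinal.mk_subtype_le _).trans_eq hVW
      · rw [← hBβ]
        exact Cardinal.mk_le_of_injective (f := fun w : ↥B => (⟨Sum.inr w.1, w.2⟩ :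
          {x : V ⊕ W // #(F.neighborSet x) = 1}))
          (by intro x y h; simpa [Subtype.ext_iff] using h)
    · -- each leaf in W has a unique neighbor, in V
      have key : ∀ w : ↥B, ∃ v : V, F.neighborSet (Sum.inr w.1) = {Sum.inl v} := by
        rintro ⟨w, hw⟩
        simp only [hB_def, Set.mem_setOf_eq] at hw
        obtain ⟨hsub, hne⟩ := Cardinal.eq_one_iff_unique.mp hw
        obtain ⟨a⟩ := hne
        obtain ⟨v, hv⟩ := hnb w a.1 a.2
        refine ⟨v, ?_⟩
        ext z
        constructor
        · intro hz
          have : (⟨z, hz⟩ : F.neighborSet (Sum.inr w)) = a := Subsingleton.elim _ _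
          have hz' : z = a.1 := congrArg Subtype.val this
          rw [hz', hv]; rfl
        · rintro rfl
          rw [← hv]; exact a.2
      choose nb hnbB using key
      have hninj : ¬ Function.Injective nb := by
        intro hinj
        have : β ≤ α := by
          calc β = #B := hBβ.symm
            _ ≤ #V := Cardinal.mk_le_of_injective hinj
            _ = α := hV
        exact absurd this (not_le.mpr hαβ)
      obtain ⟨w, w', hnbeq, hne⟩ := Function.not_injective_iff.mp hninj
      have hww' : (w : W) ≠ (w' : W) := fun h => hne (Subtype.ext h)
      have hirr : (Sum.inr (w : W) : V ⊕ W) ≠ Sum.inr (w' : W) := by simp [hww']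
      set v := nb w with hv_def
      have hw1 : F.neighborSet (Sum.inr (w : W)) = {Sum.inl v} := hnbB w
      have hw2 : F.neighborSet (Sum.inr (w' : W)) = {Sum.inl v} := by
        rw [hnbB w', ← hnbeq]
      have hadj1 : F.Adj (Sum.inr (w : W)) (Sum.inl v) := by
        have : (Sum.inl v : V ⊕ W) ∈ F.neighborSet (Sum.inr (w : W)) := by rw [hw1]; rfl
        exact this
      have hadj2 : F.Adj (Sum.inr (w' : W)) (Sum.inl v) := by
        have : (Sum.inl v : V ⊕ W) ∈ F.neighborSet (Sum.inr (w' : W)) := by rw [hw2]; rfl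
        exact this
      set σ := Equiv.swap (Sum.inr (w : W) : V ⊕ W) (Sum.inr (w' : W)) with hσ
      have hfwd : ∀ x y, F.Adj x y → F.Adj (σ x) (σ y) := by
        intro x y hxy
        rcases eq_or_ne x (Sum.inr (w : W)) with rfl | hx1
        · have hy : y = Sum.inl v := by
            have : y ∈ F.neighborSet (Sum.inr (w : W)) := hxy
            rw [hw1] at this; exact this
          subst hy
          rw [hσ, Equiv.swap_apply_left, Equiv.swap_apply_of_ne_of_ne (by simp) (by simp)]
          exact hadj2
        rcases eq_or_ne x (Sum.inr (w' : W)) with rfl | hx2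
        · have hy : y = Sum.inl v := by
            have : y ∈ F.neighborSet (Sum.inr (w' : W)) := hxy
            rw [hw2] at this; exact this
          subst hy
          rw [hσ, Equiv.swap_apply_right, Equiv.swap_apply_of_ne_of_ne (by simp) (by simp)]
          exact hadj1
        rw [hσ, Equiv.swap_apply_of_ne_of_ne hx1 hx2]
        rcases eq_or_ne y (Sum.inr (w : W)) with rfl | hy1
        · have hx : x = Sum.inl v := by
            have : x ∈ F.neighborSet (Sum.inr (w : W)) := hxy.symm
            rw [hw1] at this; exact this
          subst hx
          rw [Equiv.swap_apply_left]
          exact hadj2.symm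
        rcases eq_or_ne y (Sum.inr (w' : W)) with rfl | hy2
        · have hx : x = Sum.inl v := by
            have : x ∈ F.neighborSet (Sum.inr (w' : W)) := hxy.symm
            rw [hw2] at this; exact this
          subst hx
          rw [Equiv.swap_apply_right]
          exact hadj1.symm
        rw [Equiv.swap_apply_of_ne_of_ne hy1 hy2]
        exact hxy
      exact ⟨swapIso F σ hfwd (fun x => Equiv.swap_apply_self _ _ x),
        Sum.inr (w : W), by
          simp only [swapIso, hσ, RelIso.coe_fn_mk, Equiv.coe_fn_mk, Equiv.swap_apply_left]
          exact hirr.symm⟩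
end
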